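/- arXiv:1611.08213 — 6 statements merged into one kernel-verified Lean document; each statement's English description precedes it below -/
import Mathlib

section
/- A nonzero continuous function φ : ℝ → ℂ satisfies (φ(x+y) + φ(x−y))/2 = φ(x)·φ(y) for all x, y ∈ ℝ if and only if there exists λ ∈ ℂ such that φ(x) = cos(λx) for all x ∈ ℝ (where cos of a complex argument is the entire extension, and the constant function 1 corresponds to λ = 0). -/
/-!
With `φ 0 = 1`, the "sine" `s x = φ (x + a) - φ x * φ a` satisfies `s (x + y) = s x * φ y + φ x * s y`
and `s x * s y = (φ a ^ 2 - 1) * (φ (x + y) - φ x * φ y)`. So if `φ a ^ 2 ≠ 1`, then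
`g = φ + c * s` with `c ^ 2 * (φ a ^ 2 - 1) = 1` is multiplicative, and `φ x = (g x + g (-x)) / 2`
since `φ` is even and `s` is odd; if `φ ^ 2 = 1` everywhere, `φ` itself is multiplicative.
A continuous multiplicative `g : ℝ → ℂ` is `exp (k x)`: integrating `g (x + y) = g x * g y` over
`y ∈ [0, δ]` writes `g` through its antiderivative, so `g` is differentiable and `g' = g' 0 * g`.
Hence `φ x = cosh (k x) = cos (k i x)`.
-/

open intervalIntegral

section DAlembert

variable {G K : Type*} [AddCommGroup G] [Field K]

def IsDAlembert (φ : G → K) : Prop := ∀ x y, (φ (x + y) + φ (x - y)) / 2 = φ x * φ y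

def dAlembertSine (φ : G → K) (a x : G) : K := φ (x + a) - φ x * φ a

def dAlembertExp (φ : G → K) (a : G) (c : K) (x : G) : K := φ x + c * dAlembertSine φ a x

theorem dAlembertExp_zero {φ : G → K} (h0 : φ 0 = 1) (a : G) (c : K) :
    dAlembertExp φ a c 0 = 1 := by
  simp [dAlembertExp, dAlembertSine, h0]

namespace IsDAlembert

variable [CharZero K] {φ : G → K}

theorem map_zero_eq_one (h : IsDAlembert φ) (hne : φ ≠ 0) : φ 0 = 1 := by
  have hx0 : ∀ x, φ x = φ x * φ 0 := fun x => by simpa using h x 0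
  have h00 : φ 0 * (φ 0 - 1) = 0 := by linear_combination -hx0 0
  refine sub_eq_zero.mp ((mul_eq_zero.mp h00).resolve_left fun hz => hne ?_)
  funext x
  simpa [hz] using hx0 x

theorem map_neg (h : IsDAlembert φ) (h0 : φ 0 = 1) (x : G) : φ (-x) = φ x := by
  have h0x := h 0 x
  rw [zero_add, zero_sub, h0] at h0x
  linear_combination 2 * h0x

theorem sine_add (h : IsDAlembert φ) (a x y : G) :
    dAlembertSine φ a (x + y) = dAlembertSine φ a x * φ y + φ x * dAlembertSine φ a y := by
  have e₁ := h x (y + a)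
  have e₂ := h (x + a) y
  have e₃ := h (x - y) a
  rw [← add_assoc, ← sub_sub] at e₁
  rw [add_right_comm, add_sub_right_comm] at e₂
  simp only [dAlembertSine]
  linear_combination e₁ + e₂ - e₃ - 2 * φ a * h x y

theorem sine_mul_sine (h : IsDAlembert φ) (a x y : G) :
    dAlembertSine φ a x * dAlembertSine φ a y = (φ a ^ 2 - 1) * (φ (x + y) - φ x * φ y) := by
  have e₁ := h x (y + a)
  have e₂ := h (x + a) y
  have e₃ := h (x - y) a
  have e₄ := h (x + a) (y + a)
  have e₅ := h (x + y + a) a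
  rw [← add_assoc, ← sub_sub] at e₁
  rw [add_right_comm, add_sub_right_comm] at e₂
  rw [show x + a + (y + a) = x + y + a + a by abel, show x + a - (y + a) = x - y by abel] at e₄
  rw [add_sub_cancel_right] at e₅
  simp only [dAlembertSine]
  linear_combination -e₄ + φ a * e₁ + φ a * e₂ + (1 - 2 * φ a ^ 2) * h x y - φ a * e₃ + e₅

theorem sine_neg (h : IsDAlembert φ) (h0 : φ 0 = 1) (a x : G) :
    dAlembertSine φ a (-x) = -dAlembertSine φ a x := by
  simp only [dAlembertSine]
  rw [h.map_neg h0, show -x + a = -(x - a) by abel, h.map_neg h0]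
  linear_combination 2 * h x a

theorem exp_add (h : IsDAlembert φ) {a : G} {c : K} (hc : c ^ 2 * (φ a ^ 2 - 1) = 1) (x y : G) :
    dAlembertExp φ a c (x + y) = dAlembertExp φ a c x * dAlembertExp φ a c y := by
  simp only [dAlembertExp]
  linear_combination c * h.sine_add a x y - c ^ 2 * h.sine_mul_sine a x y -
    (φ (x + y) - φ x * φ y) * hc

theorem map_add_of_sq_eq_one (h : IsDAlembert φ) (hsq : ∀ x, φ x ^ 2 = 1) (x y : G) :
    φ (x + y) = φ x * φ y := by
  -- `φ (x - y) = 2 * φ x * φ y - φ (x + y)` also squares to `1`.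
  have hpu : φ x * φ y * φ (x + y) = 1 := by
    linear_combination φ y ^ 2 * hsq x + hsq y + (hsq (x + y) - hsq (x - y)) / 4 +
      (φ (x - y) + 2 * φ x * φ y - φ (x + y)) / 2 * h x y
  linear_combination φ x * φ y * hpu - φ (x + y) * (φ y ^ 2 * hsq x + hsq y)

theorem exists_exp_add [IsAlgClosed K] (h : IsDAlembert φ) :
    ∃ (a : G) (c : K), ∀ x y,
      dAlembertExp φ a c (x + y) = dAlembertExp φ a c x * dAlembertExp φ a c y := by
  by_cases hsq : ∀ x, φ x ^ 2 = 1
  · refine ⟨0, 0, fun x y => ?_⟩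
    simpa only [dAlembertExp, zero_mul, add_zero] using h.map_add_of_sq_eq_one hsq x y
  · obtain ⟨a, ha⟩ := not_forall.mp hsq
    obtain ⟨c, hc⟩ := IsAlgClosed.exists_pow_nat_eq (φ a ^ 2 - 1)⁻¹ two_pos
    exact ⟨a, c, h.exp_add (by rw [hc, inv_mul_cancel₀ (sub_ne_zero.mpr ha)])⟩

theorem eq_exp_add_exp_neg (h : IsDAlembert φ) (h0 : φ 0 = 1) (a : G) (c : K) (x : G) :
    φ x = (dAlembertExp φ a c x + dAlembertExp φ a c (-x)) / 2 := by
  simp only [dAlembertExp]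
  rw [h.sine_neg h0, h.map_neg h0]
  ring

end IsDAlembert

end DAlembert

theorem isDAlembert_cos_mul (l : ℂ) : IsDAlembert fun x : ℝ => Complex.cos (l * x) := by
  intro x y
  simp only [Complex.ofReal_add, Complex.ofReal_sub, mul_add, mul_sub, Complex.cos_add,
    Complex.cos_sub]
  ring

section Exponential

variable {g : ℝ → ℂ}

theorem Continuous.differentiable_of_map_add_eq_mul (hc : Continuous g) (h0 : g 0 ≠ 0)
    (hm : ∀ x y, g (x + y) = g x * g y) : Differentiable ℝ g := by
  set G : ℝ → ℂ := fun y => ∫ t in (0 : ℝ)..y, g t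
  have hG : ∀ y, HasDerivAt G (g y) y := fun y => (hc.integral_hasStrictDerivAt 0 y).hasDerivAt
  obtain ⟨δ, hδ⟩ : ∃ δ, G δ ≠ 0 := ((hG 0).eventually_ne h0 (c := 0)).exists
  have hshift : ∀ u, G (u + δ) - G u = g u * G δ := fun u => by
    rw [integral_interval_sub_left (hc.intervalIntegrable _ _) (hc.intervalIntegrable _ _),
      ← integral_const_mul]
    simpa only [hm, add_zero] using (integral_comp_add_left g u (a := 0) (b := δ)).symm
  have hg : g = fun u => (G (u + δ) - G u) / G δ := funext fun u => by
    rw [hshift, mul_div_cancel_right₀ _ hδ]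
  rw [hg]
  exact fun u => (((hG (u + δ)).comp_add_const u δ).sub (hG u)).differentiableAt.div_const _

theorem Continuous.hasDerivAt_of_map_add_eq_mul (hc : Continuous g) (h0 : g 0 ≠ 0)
    (hm : ∀ x y, g (x + y) = g x * g y) (x : ℝ) : HasDerivAt g (deriv g 0 * g x) x := by
  have hd := hc.differentiable_of_map_add_eq_mul h0 hm
  have h₁ : HasDerivAt (fun y => g (x + y)) (deriv g x) 0 := by
    simpa using (hd (x + 0)).hasDerivAt.comp_const_add x 0
  have h₂ : HasDerivAt (fun y => g (x + y)) (g x * deriv g 0) 0 := by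
    simpa only [hm] using (hd 0).hasDerivAt.const_mul (g x)
  rw [mul_comm, ← h₁.unique h₂]
  exact (hd x).hasDerivAt

theorem eq_exp_mul_of_hasDerivAt {k : ℂ} (hd : ∀ x, HasDerivAt g (k * g x) x) (h0 : g 0 = 1)
    (x : ℝ) : g x = Complex.exp (k * x) := by
  set f : ℝ → ℂ := fun u => g u * Complex.exp (-(k * u))
  have hf : ∀ u, HasDerivAt f 0 u := fun u => by
    have he : HasDerivAt (fun u : ℝ => Complex.exp (-(k * u))) (Complex.exp (-(k * u)) * -k) u := by
      simpa using ((hasDerivAt_id u).ofReal_comp.const_mul k).fun_neg.cexp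
    have hfu := (hd u).fun_mul he
    rwa [show k * g u * Complex.exp (-(k * u)) + g u * (Complex.exp (-(k * u)) * -k) = 0 by ring]
      at hfu
  have hfx : f x = f 0 :=
    is_const_of_deriv_eq_zero (fun u => (hf u).differentiableAt) (fun u => (hf u).deriv) x 0
  simp only [f, h0, Complex.ofReal_zero, mul_zero, neg_zero, Complex.exp_zero, mul_one] at hfx
  rw [← mul_one (g x), ← Complex.exp_zero, ← add_neg_cancel (k * x), Complex.exp_add,
    mul_left_comm, hfx, mul_one]

theorem Continuous.exists_eq_exp_mul_of_map_add_eq_mul (hc : Continuous g) (h0 : g 0 = 1)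
    (hm : ∀ x y, g (x + y) = g x * g y) : ∃ k : ℂ, ∀ x, g x = Complex.exp (k * x) :=
  ⟨deriv g 0, eq_exp_mul_of_hasDerivAt (hc.hasDerivAt_of_map_add_eq_mul (by simp [h0]) hm) h0⟩

end Exponential

/-- The d'Alembert (cosine) functional equation: a nonzero continuous function
`φ : ℝ → ℂ` satisfies `(φ(x+y) + φ(x−y))/2 = φ(x)·φ(y)` for all `x, y` if and only if
there exists `λ ∈ ℂ` with `φ(x) = cos(λ x)` for all `x`. -/
theorem stmt_0 (φ : ℝ → ℂ) (hcont : Continuous φ) (hne : φ ≠ 0) :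
    (∀ x y : ℝ, (φ (x + y) + φ (x - y)) / 2 = φ x * φ y) ↔
      ∃ l : ℂ, ∀ x : ℝ, φ x = Complex.cos (l * x) := by
  constructor
  · intro (h : IsDAlembert φ)
    have h0 := h.map_zero_eq_one hne
    obtain ⟨a, c, hmul⟩ := h.exists_exp_add
    have hexp : Continuous (dAlembertExp φ a c) := by
      unfold dAlembertExp dAlembertSine
      fun_prop
    obtain ⟨k, hk⟩ := hexp.exists_eq_exp_mul_of_map_add_eq_mul (dAlembertExp_zero h0 a c) hmul
    refine ⟨k * Complex.I, fun x => ?_⟩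
    rw [h.eq_exp_add_exp_neg h0 a c x, hk, hk, mul_right_comm, Complex.cos_mul_I,
      Complex.cosh, Complex.ofReal_neg, mul_neg]
  · rintro ⟨l, hl⟩
    obtain rfl : φ = _ := funext hl
    exact isDAlembert_cos_mul l
end

section
/- The function φ_λ(r) = j_{(n−2)/2}(iλr) (the power series ∑_{ℓ≥0} Γ(n/2)/(ℓ!Γ(n/2+ℓ)) (−λ²r²/4)^ℓ) satisfies the radial Bessel differential equation φ''(r) + ((n−1)/r) φ'(r) + λ² φ(r) = 0 for all r ≠ 0, with φ(0) = 1. -/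
/-!
With `c = n / 2`, the series is `φ r = ₀F₁(; c; -λ² r² / 4)`, where
`₀F₁(; c; w) = ∑ Γ(c) / (k! Γ(c + k)) wᵏ` is entire (ratio test). Its coefficients satisfy
`(k + 1)(c + k) aₖ₊₁ = aₖ`, which says exactly that `w H'' + c H' = H`; the chain rule along
`w = -λ² r² / 4` turns this equation into the radial one with `2c - 1 = n - 1`. Termwise
differentiation of the power series is justified by Weierstrass' theorem on locally uniform limits
of holomorphic functions.
-/

section PowerSeries

variable {b : ℕ → ℂ}

lemma summable_norm_succ_mul_mul_pow (hb : ∀ z : ℂ, Summable fun k => ‖b k * z ^ k‖) (z : ℂ) :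
    Summable fun k => ‖((k + 1 : ℕ) : ℂ) * b (k + 1) * z ^ k‖ := by
  set R := ‖z‖ + 1
  have hR : 1 ≤ R := by simp [R]
  have hbound : ∀ k : ℕ, ‖((k + 1 : ℕ) : ℂ) * b (k + 1) * z ^ k‖
      ≤ ‖b (k + 1) * ((2 * R : ℝ) : ℂ) ^ (k + 1)‖ := by
    intro k
    have hk : ((k + 1 : ℕ) : ℝ) ≤ 2 ^ (k + 1) := by exact_mod_cast (Nat.lt_two_pow_self).le
    have hz : ‖z‖ ^ k ≤ R ^ (k + 1) :=
      (pow_le_pow_left₀ (norm_nonneg z) (by simp [R]) k).trans (pow_le_pow_right₀ hR k.le_succ)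
    rw [norm_mul, norm_mul, norm_mul, norm_pow, norm_pow, Complex.norm_natCast, Complex.norm_real,
      Real.norm_of_nonneg (by positivity), mul_pow]
    calc ((k + 1 : ℕ) : ℝ) * ‖b (k + 1)‖ * ‖z‖ ^ k
        = ‖b (k + 1)‖ * (((k + 1 : ℕ) : ℝ) * ‖z‖ ^ k) := by ring
      _ ≤ ‖b (k + 1)‖ * (2 ^ (k + 1) * R ^ (k + 1)) := by gcongr
  exact .of_nonneg_of_le (fun _ => norm_nonneg _) hbound ((summable_nat_add_iff 1).mpr (hb _))

theorem hasDerivAt_tsum_mul_pow (hb : ∀ z : ℂ, Summable fun k => ‖b k * z ^ k‖) (z : ℂ) :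
    HasDerivAt (fun w => ∑' k, b k * w ^ k)
      (∑' k, ((k + 1 : ℕ) : ℂ) * b (k + 1) * z ^ k) z := by
  set U := Metric.ball (0 : ℂ) (‖z‖ + 1)
  have hz : z ∈ U := by simp [U]
  have hdiff : ∀ k, DifferentiableOn ℂ (fun w => b k * w ^ k) U := fun k => by fun_prop
  have hle : ∀ k, ∀ w ∈ U, ‖b k * w ^ k‖ ≤ ‖b k * ((‖z‖ + 1 : ℝ) : ℂ) ^ k‖ := by
    intro k w hw
    rw [Metric.mem_ball, dist_zero_right] at hw
    rw [norm_mul, norm_mul, norm_pow, norm_pow, Complex.norm_real,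
      Real.norm_of_nonneg (by positivity)]
    gcongr
  have hterm : ∀ k, deriv (fun w => b k * w ^ k) z = b k * (k * z ^ (k - 1)) := fun k =>
    ((hasDerivAt_pow k z).const_mul (b k)).deriv
  have hsum := Complex.hasSum_deriv_of_summable_norm (hb _) hdiff Metric.isOpen_ball hle hz
  simp only [hterm] at hsum
  have hsum' := (hasSum_nat_add_iff' 1).mpr hsum
  simp only [Finset.range_one, Finset.sum_singleton, Nat.cast_zero, zero_mul, mul_zero, sub_zero,
    add_tsub_cancel_right] at hsum'
  have hdiffAt : DifferentiableAt ℂ (fun w => ∑' k, b k * w ^ k) z :=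
    (Complex.differentiableOn_tsum_of_summable_norm (hb _) hdiff Metric.isOpen_ball
      hle).differentiableAt (Metric.isOpen_ball.mem_nhds hz)
  refine hdiffAt.hasDerivAt.congr_deriv ?_
  rw [← hsum'.tsum_eq]
  congr 1 with k
  push_cast
  ring

end PowerSeries

section Hypergeometric0F1

variable {c : ℝ}

noncomputable def hypergeometric0F1Coeff (c : ℝ) (k : ℕ) : ℝ :=
  Real.Gamma c / (Nat.factorial k * Real.Gamma (c + k))

noncomputable def hypergeometric0F1 (c : ℝ) (w : ℂ) : ℂ :=
  ∑' k, (hypergeometric0F1Coeff c k : ℂ) * w ^ k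

lemma hypergeometric0F1Coeff_zero (hc : 0 < c) : hypergeometric0F1Coeff c 0 = 1 := by
  simp [hypergeometric0F1Coeff, (Real.Gamma_pos_of_pos hc).ne']

lemma hypergeometric0F1Coeff_succ (hc : 0 < c) (k : ℕ) :
    (k + 1) * (c + k) * hypergeometric0F1Coeff c (k + 1) = hypergeometric0F1Coeff c k := by
  have hck : 0 < c + k := by positivity
  have hGamma : Real.Gamma (c + (k + 1 : ℕ)) = (c + k) * Real.Gamma (c + k) := by
    rw [Nat.cast_succ, ← add_assoc, Real.Gamma_add_one hck.ne']
  have := (Real.Gamma_pos_of_pos hck).ne'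
  simp only [hypergeometric0F1Coeff, hGamma, Nat.factorial_succ, Nat.cast_mul]
  field_simp
  push_cast
  ring

lemma summable_norm_hypergeometric0F1Coeff_mul_pow (hc : 0 < c) (z : ℂ) :
    Summable fun k => ‖(hypergeometric0F1Coeff c k : ℂ) * z ^ k‖ := by
  refine summable_of_ratio_norm_eventually_le (r := 1 / 2) (by norm_num) ?_
  filter_upwards [Filter.eventually_ge_atTop ⌈2 * ‖z‖⌉₊] with k hk
  have hkz : 2 * ‖z‖ ≤ k := Nat.ceil_le.mp hk
  have hrec : (k + 1) * (c + k) * |hypergeometric0F1Coeff c (k + 1)|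
      = |hypergeometric0F1Coeff c k| := by
    rw [← hypergeometric0F1Coeff_succ hc k, abs_mul,
      abs_of_pos (show (0 : ℝ) < (k + 1) * (c + k) by positivity)]
  simp only [norm_mul, norm_pow, Complex.norm_real, Real.norm_eq_abs, abs_abs, abs_norm]
  rw [← hrec, pow_succ]
  have hz : ‖z‖ ≤ (k + 1) * (c + k) / 2 := by nlinarith
  have hnonneg : 0 ≤ |hypergeometric0F1Coeff c (k + 1)| * ‖z‖ ^ k := by positivity
  nlinarith

lemma hypergeometric0F1_zero (hc : 0 < c) : hypergeometric0F1 c 0 = 1 := by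
  rw [hypergeometric0F1, tsum_eq_single 0 (fun k hk => by simp [hk])]
  simp [hypergeometric0F1Coeff_zero hc]

lemma hasDerivAt_hypergeometric0F1 (hc : 0 < c) (w : ℂ) :
    HasDerivAt (hypergeometric0F1 c)
      (∑' k, ((k + 1 : ℕ) : ℂ) * hypergeometric0F1Coeff c (k + 1) * w ^ k) w :=
  hasDerivAt_tsum_mul_pow (summable_norm_hypergeometric0F1Coeff_mul_pow hc) w

lemma deriv_hypergeometric0F1 (hc : 0 < c) :
    deriv (hypergeometric0F1 c) =
      fun w => ∑' k, ((k + 1 : ℕ) : ℂ) * hypergeometric0F1Coeff c (k + 1) * w ^ k :=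
  funext fun w => (hasDerivAt_hypergeometric0F1 hc w).deriv

lemma hasDerivAt_deriv_hypergeometric0F1 (hc : 0 < c) (w : ℂ) :
    HasDerivAt (deriv (hypergeometric0F1 c))
      (∑' k, ((k + 1 : ℕ) : ℂ) * (((k + 1 + 1 : ℕ) : ℂ) * hypergeometric0F1Coeff c (k + 1 + 1)) *
        w ^ k) w := by
  rw [deriv_hypergeometric0F1 hc]
  exact hasDerivAt_tsum_mul_pow
    (summable_norm_succ_mul_mul_pow (summable_norm_hypergeometric0F1Coeff_mul_pow hc)) w

theorem hypergeometric0F1_ode (hc : 0 < c) (w : ℂ) :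
    w * deriv (deriv (hypergeometric0F1 c)) w + c * deriv (hypergeometric0F1 c) w =
      hypergeometric0F1 c w := by
  have hb₁ := summable_norm_succ_mul_mul_pow (summable_norm_hypergeometric0F1Coeff_mul_pow hc)
  have hH₁ := (hb₁ w).of_norm.hasSum
  have hH₂ := (summable_norm_succ_mul_mul_pow hb₁ w).of_norm.hasSum
  rw [← (hasDerivAt_hypergeometric0F1 hc w).deriv] at hH₁
  rw [← (hasDerivAt_deriv_hypergeometric0F1 hc w).deriv] at hH₂
  have hwH₂ : HasSum
      (fun k : ℕ => (k : ℂ) * (((k + 1 : ℕ) : ℂ) * hypergeometric0F1Coeff c (k + 1)) * w ^ k)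
      (w * deriv (deriv (hypergeometric0F1 c)) w) := by
    have hshift : HasSum
        (fun k : ℕ => ((k + 1 : ℕ) : ℂ) * (((k + 1 + 1 : ℕ) : ℂ) *
          hypergeometric0F1Coeff c (k + 1 + 1)) * w ^ (k + 1))
        (w * deriv (deriv (hypergeometric0F1 c)) w) :=
      (hH₂.mul_left w).congr_fun fun k => by ring
    simpa only [Nat.cast_zero, zero_mul, zero_add] using
      HasSum.zero_add (f := fun k : ℕ =>
        (k : ℂ) * (((k + 1 : ℕ) : ℂ) * hypergeometric0F1Coeff c (k + 1)) * w ^ k) hshift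
  have hsum := hwH₂.add (hH₁.mul_left (c : ℂ))
  rw [hypergeometric0F1, ← hsum.tsum_eq]
  congr 1 with k
  rw [← hypergeometric0F1Coeff_succ hc k]
  push_cast
  ring

lemma differentiable_hypergeometric0F1 (hc : 0 < c) : Differentiable ℂ (hypergeometric0F1 c) :=
  fun w => (hasDerivAt_hypergeometric0F1 hc w).differentiableAt

lemma differentiable_deriv_hypergeometric0F1 (hc : 0 < c) :
    Differentiable ℂ (deriv (hypergeometric0F1 c)) :=
  fun w => (hasDerivAt_deriv_hypergeometric0F1 hc w).differentiableAt

end Hypergeometric0F1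

theorem radial_ode_of_hypergeometric0F1_ode {H : ℂ → ℂ} {c : ℂ} (hH : Differentiable ℂ H)
    (hH' : Differentiable ℂ (deriv H)) (hode : ∀ w, w * deriv (deriv H) w + c * deriv H w = H w)
    (lam : ℂ) {r : ℝ} (hr : r ≠ 0) :
    let φ : ℝ → ℂ := fun r => H (-(lam ^ 2 * r ^ 2) / 4)
    deriv (deriv φ) r + (2 * c - 1) / (r : ℂ) * deriv φ r + lam ^ 2 * φ r = 0 := by
  intro φ
  have hg : ∀ r : ℝ,
      HasDerivAt (fun r : ℝ => -(lam ^ 2 * (r : ℂ) ^ 2) / 4) (-(lam ^ 2 * r) / 2) r :=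
    fun r => HasDerivAt.comp_ofReal <|
      (((hasDerivAt_pow 2 (r : ℂ)).const_mul (lam ^ 2)).neg.div_const 4).congr_deriv (by ring)
  have hg' : ∀ r : ℝ, HasDerivAt (fun r : ℝ => -(lam ^ 2 * r) / 2) (-lam ^ 2 / 2) r :=
    fun r => HasDerivAt.comp_ofReal <|
      (((hasDerivAt_id (r : ℂ)).const_mul (lam ^ 2)).neg.div_const 2).congr_deriv (by ring)
  have hφ' : deriv φ = fun r : ℝ => deriv H (-(lam ^ 2 * r ^ 2) / 4) * (-(lam ^ 2 * r) / 2) :=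
    funext fun r => ((hH _).hasDerivAt.comp r (hg r)).deriv
  have hφ'' : deriv (deriv φ) r = deriv (deriv H) (-(lam ^ 2 * r ^ 2) / 4) * (-(lam ^ 2 * r) / 2)
      * (-(lam ^ 2 * r) / 2) + deriv H (-(lam ^ 2 * r ^ 2) / 4) * (-lam ^ 2 / 2) := by
    rw [hφ']
    exact (((hH' _).hasDerivAt.comp r (hg r)).mul (hg' r)).deriv
  have hcancel : (2 * c - 1) / (r : ℂ) * (-(lam ^ 2 * r) / 2) = -((2 * c - 1) * lam ^ 2 / 2) := by
    field_simp [Complex.ofReal_ne_zero.mpr hr]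
  rw [hφ'', hφ']
  linear_combination (-lam ^ 2) * hode (-(lam ^ 2 * r ^ 2) / 4) +
    deriv H (-(lam ^ 2 * r ^ 2) / 4) * hcancel

/-- The normalized modified Bessel series `φ_λ(r) = j_{(n−2)/2}(iλr)` satisfies the radial
Bessel equation `φ'' + ((n−1)/r) φ' + λ² φ = 0` for `r ≠ 0`, with `φ(0) = 1`. -/
theorem stmt_4 (n : ℕ) (hn : 1 ≤ n) (lam : ℂ) (φ : ℝ → ℂ)
    (hφ : ∀ r : ℝ, φ r = ∑' ℓ : ℕ,
      ((Real.Gamma (n / 2) / (Nat.factorial ℓ * Real.Gamma (n / 2 + ℓ)) : ℝ) : ℂ) *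
        (-(lam ^ 2 * r ^ 2) / 4) ^ ℓ) :
    (∀ r : ℝ, r ≠ 0 →
      deriv (deriv φ) r + ((n : ℂ) - 1) / (r : ℂ) * deriv φ r + lam ^ 2 * φ r = 0) ∧
    φ 0 = 1 := by
  have hc : (0 : ℝ) < n / 2 := div_pos (Nat.cast_pos.mpr hn) two_pos
  obtain rfl : φ = fun r : ℝ => hypergeometric0F1 (n / 2) (-(lam ^ 2 * r ^ 2) / 4) := funext hφ
  refine ⟨fun r hr => ?_, by simpa using hypergeometric0F1_zero hc⟩
  have := radial_ode_of_hypergeometric0F1_ode (differentiable_hypergeometric0F1 hc)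
    (differentiable_deriv_hypergeometric0F1 hc) (hypergeometric0F1_ode hc) lam hr
  push_cast at this
  convert this using 4
  ring
end

section
/- For n ≥ 2 odd, n = 2m+1, define the Abel transform of a suitable even function f on [0,∞) by (𝒜f)(r) = ((2π)^{(n−1)/2}/Γ((n−1)/2)) ∫_r^∞ sinh s · (cosh s − cosh r)^{(n−3)/2} f(s) ds. Then the operator (𝒜^{−1}g)(r) = (2π)^{−(n−1)/2} (−(1/sinh r) ∂/∂r)^{(n−1)/2} g(r) inverts 𝒜 on smooth even functions of sufficiently fast decay: 𝒜^{−1}(𝒜f) = f. -/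
open Real MeasureTheory Set

namespace AbelInvAux

noncomputable def g (f : ℝ → ℝ) (j : ℕ) (s : ℝ) : ℝ :=
  Real.sinh s * Real.cosh s ^ j * f s

noncomputable def I (f : ℝ → ℝ) (j : ℕ) (r : ℝ) : ℝ := ∫ s in Ioi r, g f j s

noncomputable def B (f : ℝ → ℝ) (k : ℕ) (r : ℝ) : ℝ :=
  ∫ s in Ioi r, Real.sinh s * (Real.cosh s - Real.cosh r) ^ k * f s

lemma cosh_le_exp_abs (s : ℝ) : Real.cosh s ≤ Real.exp |s| := by
  rw [Real.cosh_eq]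
  have h1 := Real.exp_le_exp.2 (le_abs_self s)
  have h2 := Real.exp_le_exp.2 (neg_le_abs s)
  linarith

lemma abs_sinh_le_cosh (s : ℝ) : |Real.sinh s| ≤ Real.cosh s := by
  rw [Real.sinh_eq, Real.cosh_eq, abs_le]
  constructor <;> nlinarith [Real.exp_pos s, Real.exp_pos (-s)]

lemma gcont {f : ℝ → ℝ} (hf : Continuous f) (j : ℕ) : Continuous (g f j) := by
  exact ((Real.continuous_sinh.mul (Real.continuous_cosh.pow j)).mul hf)

lemma gInt {f : ℝ → ℝ} (hf : Continuous f)
    (hdecay : ∀ c : ℝ, Integrable (fun s : ℝ => f s * Real.exp (c * s)))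
    (j : ℕ) : Integrable (g f j) := by
  have h1 := (hdecay ((j : ℝ) + 1)).abs
  have h2 := (hdecay (-((j : ℝ) + 1))).abs
  refine (h1.add h2).mono' ((gcont hf j).aestronglyMeasurable) ?_
  filter_upwards with s
  have hc : (0:ℝ) < Real.cosh s := Real.cosh_pos s
  have hb : |Real.sinh s| * Real.cosh s ^ j ≤ Real.exp (((j : ℝ) + 1) * |s|) := by
    calc |Real.sinh s| * Real.cosh s ^ j ≤ Real.cosh s * Real.cosh s ^ j := by
          gcongr; exact abs_sinh_le_cosh s
      _ = Real.cosh s ^ (j + 1) := by ring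
      _ ≤ Real.exp |s| ^ (j + 1) := pow_le_pow_left₀ hc.le (cosh_le_exp_abs s) _
      _ = Real.exp (((j : ℝ) + 1) * |s|) := by
          rw [← Real.exp_nat_mul]; push_cast; ring_nf
  have hexp : Real.exp (((j : ℝ) + 1) * |s|) ≤
      Real.exp (((j : ℝ) + 1) * s) + Real.exp (-((j : ℝ) + 1) * s) := by
    rcases abs_cases s with ⟨h, _⟩ | ⟨h, _⟩
    · rw [h]; nlinarith [Real.exp_pos (-((j : ℝ) + 1) * s)]
    · rw [h]
      have hh : ((j : ℝ) + 1) * -s = -((j : ℝ) + 1) * s := by ring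
      rw [hh]
      nlinarith [Real.exp_pos (((j : ℝ) + 1) * s)]
  have : ‖g f j s‖ = |Real.sinh s| * Real.cosh s ^ j * |f s| := by
    rw [Real.norm_eq_abs, g, abs_mul, abs_mul, abs_pow, abs_of_pos hc]
  rw [this]
  calc |Real.sinh s| * Real.cosh s ^ j * |f s|
      ≤ Real.exp (((j : ℝ) + 1) * |s|) * |f s| := by gcongr
    _ ≤ (Real.exp (((j : ℝ) + 1) * s) + Real.exp (-((j : ℝ) + 1) * s)) * |f s| := by
        gcongr
    _ = |f s * Real.exp (((j : ℝ) + 1) * s)| + |f s * Real.exp (-((j : ℝ) + 1) * s)| := by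
        rw [abs_mul, abs_mul, abs_of_pos (Real.exp_pos _), abs_of_pos (Real.exp_pos _)]
        ring

lemma hasDerivI {f : ℝ → ℝ} (hf : Continuous f)
    (hdecay : ∀ c : ℝ, Integrable (fun s : ℝ => f s * Real.exp (c * s)))
    (j : ℕ) (r : ℝ) : HasDerivAt (I f j) (-(g f j r)) r := by
  have hint := gInt hf hdecay j
  have hrep : I f j = fun x => (∫ s, g f j s) -
      ((∫ s in Iic (0:ℝ), g f j s) + ∫ s in (0:ℝ)..x, g f j s) := by
    funext x
    have h1 : (∫ s in Iic x, g f j s) + ∫ s in Ioi x, g f j s = ∫ s, g f j s := by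
      rw [← compl_Iic]
      exact integral_add_compl measurableSet_Iic hint
    have h2 : (∫ s in Iic x, g f j s) - ∫ s in Iic (0:ℝ), g f j s
        = ∫ s in (0:ℝ)..x, g f j s :=
      intervalIntegral.integral_Iic_sub_Iic hint.integrableOn hint.integrableOn
    simp only [I]
    linarith
  rw [hrep]
  have hD : HasDerivAt (fun x => ∫ s in (0:ℝ)..x, g f j s) (g f j r) r :=
    intervalIntegral.integral_hasDerivAt_right hint.intervalIntegrable
      ((gcont hf j).stronglyMeasurableAtFilter _ _) (gcont hf j).continuousAt
  exact (hD.const_add _).const_sub _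

lemma Bsum {f : ℝ → ℝ} (hf : Continuous f)
    (hdecay : ∀ c : ℝ, Integrable (fun s : ℝ => f s * Real.exp (c * s)))
    (k : ℕ) (r : ℝ) :
    B f k r = ∑ j ∈ Finset.range (k + 1),
      (k.choose j : ℝ) * (-Real.cosh r) ^ (k - j) * I f j r := by
  have hpt : ∀ s : ℝ, Real.sinh s * (Real.cosh s - Real.cosh r) ^ k * f s
      = ∑ j ∈ Finset.range (k + 1),
        ((k.choose j : ℝ) * (-Real.cosh r) ^ (k - j)) * g f j s := by
    intro s
    rw [sub_eq_add_neg, add_pow, Finset.mul_sum, Finset.sum_mul]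
    refine Finset.sum_congr rfl fun j _ => ?_
    simp only [g]; ring
  calc B f k r = ∫ s in Ioi r, ∑ j ∈ Finset.range (k + 1),
        ((k.choose j : ℝ) * (-Real.cosh r) ^ (k - j)) * g f j s := by
        simp only [B]
        exact integral_congr_ae (Filter.Eventually.of_forall fun s => hpt s)
    _ = ∑ j ∈ Finset.range (k + 1),
        ∫ s in Ioi r, ((k.choose j : ℝ) * (-Real.cosh r) ^ (k - j)) * g f j s := by
        exact integral_finset_sum _ fun j _ =>
          ((gInt hf hdecay j).const_mul _).integrableOn
    _ = ∑ j ∈ Finset.range (k + 1),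
        (k.choose j : ℝ) * (-Real.cosh r) ^ (k - j) * I f j r := by
        refine Finset.sum_congr rfl fun j _ => ?_
        rw [MeasureTheory.integral_const_mul]; rfl

lemma hasDerivB {f : ℝ → ℝ} (hf : Continuous f)
    (hdecay : ∀ c : ℝ, Integrable (fun s : ℝ => f s * Real.exp (c * s)))
    (n : ℕ) (r : ℝ) :
    HasDerivAt (B f (n + 1)) (-((n : ℝ) + 1) * Real.sinh r * B f n r) r := by
  have hBe : B f (n + 1) = fun x => ∑ j ∈ Finset.range (n + 2),
      ((n + 1).choose j : ℝ) * (-Real.cosh x) ^ (n + 1 - j) * I f j x :=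
    funext fun x => Bsum hf hdecay (n + 1) x
  rw [hBe]
  have hterm : ∀ j ∈ Finset.range (n + 2),
      HasDerivAt (fun x => ((n + 1).choose j : ℝ) * (-Real.cosh x) ^ (n + 1 - j) * I f j x)
        (((n + 1).choose j : ℝ) * (((n + 1 - j : ℕ) : ℝ) * (-Real.cosh r) ^ (n + 1 - j - 1)
            * (-Real.sinh r)) * I f j r
          + ((n + 1).choose j : ℝ) * (-Real.cosh r) ^ (n + 1 - j) * (-(g f j r))) r := by
    intro j _
    have h1 : HasDerivAt (fun x : ℝ => -Real.cosh x) (-Real.sinh r) r :=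
      (Real.hasDerivAt_cosh r).neg
    have h2 := h1.pow (n + 1 - j)
    have h3 := h2.const_mul (((n + 1).choose j : ℝ))
    have h4 := h3.mul (hasDerivI hf hdecay j r)
    exact h4
  have hsum := HasDerivAt.fun_sum hterm
  have heq : ∑ j ∈ Finset.range (n + 2),
      (((n + 1).choose j : ℝ) * (((n + 1 - j : ℕ) : ℝ) * (-Real.cosh r) ^ (n + 1 - j - 1)
          * (-Real.sinh r)) * I f j r
        + ((n + 1).choose j : ℝ) * (-Real.cosh r) ^ (n + 1 - j) * (-(g f j r)))
      = -((n : ℝ) + 1) * Real.sinh r * B f n r := by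
    rw [Finset.sum_add_distrib]
    have hzero : ∑ j ∈ Finset.range (n + 2),
        ((n + 1).choose j : ℝ) * (-Real.cosh r) ^ (n + 1 - j) * (-(g f j r)) = 0 := by
      have hbin : ∑ j ∈ Finset.range (n + 2),
          Real.cosh r ^ j * (-Real.cosh r) ^ (n + 1 - j) * ((n + 1).choose j : ℝ)
          = (Real.cosh r + -Real.cosh r) ^ (n + 1) := (add_pow _ _ _).symm
      have : ∑ j ∈ Finset.range (n + 2),
          ((n + 1).choose j : ℝ) * (-Real.cosh r) ^ (n + 1 - j) * (-(g f j r))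
          = (-(Real.sinh r * f r)) * ∑ j ∈ Finset.range (n + 2),
            Real.cosh r ^ j * (-Real.cosh r) ^ (n + 1 - j) * ((n + 1).choose j : ℝ) := by
        rw [Finset.mul_sum]
        refine Finset.sum_congr rfl fun j _ => ?_
        simp only [g]; ring
      rw [this, hbin]
      simp
    rw [hzero, add_zero]
    have hmain : ∑ j ∈ Finset.range (n + 2),
        ((n + 1).choose j : ℝ) * (((n + 1 - j : ℕ) : ℝ) * (-Real.cosh r) ^ (n + 1 - j - 1)
          * (-Real.sinh r)) * I f j r
        = -((n : ℝ) + 1) * Real.sinh r *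
          ∑ j ∈ Finset.range (n + 1),
            (n.choose j : ℝ) * (-Real.cosh r) ^ (n - j) * I f j r := by
      rw [Finset.sum_range_succ]
      have hlast : ((n + 1).choose (n + 1) : ℝ)
          * (((n + 1 - (n + 1) : ℕ) : ℝ) * (-Real.cosh r) ^ (n + 1 - (n + 1) - 1)
            * (-Real.sinh r)) * I f (n + 1) r = 0 := by
        simp
      rw [hlast, add_zero, Finset.mul_sum]
      refine Finset.sum_congr rfl fun j hj => ?_
      have hj' : j ≤ n := by
        have := Finset.mem_range.1 hj; omega
      have hcm : ((n + 1).choose j : ℝ) * ((n + 1 - j : ℕ) : ℝ)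
          = ((n : ℝ) + 1) * (n.choose j : ℝ) := by
        have h := Nat.choose_mul_succ_eq n j
        have h2 : (n.choose j : ℝ) * ((n : ℝ) + 1)
            = ((n + 1).choose j : ℝ) * ((n + 1 - j : ℕ) : ℝ) := by exact_mod_cast h
        linarith
      have hexp : n + 1 - j - 1 = n - j := by omega
      rw [hexp]
      linear_combination ((-Real.cosh r) ^ (n - j) * (-Real.sinh r) * I f j r) * hcm
    rw [hmain, ← Bsum hf hdecay n r]
  rw [heq] at hsum
  exact hsum

lemma hasDerivB0 {f : ℝ → ℝ} (hf : Continuous f)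
    (hdecay : ∀ c : ℝ, Integrable (fun s : ℝ => f s * Real.exp (c * s)))
    (r : ℝ) : HasDerivAt (B f 0) (-(Real.sinh r * f r)) r := by
  have hBI : B f 0 = I f 0 := by
    funext x
    simp only [B, I, g, pow_zero, mul_one]
  rw [hBI]
  have := hasDerivI hf hdecay 0 r
  simpa [g] using this

end AbelInvAux

open AbelInvAux in
/-- Inversion of the Abel transform on odd-dimensional hyperbolic space `Hⁿ`, `n = 2m+1`:
if `𝒜f(r) = ((2π)^{(n−1)/2}/Γ((n−1)/2)) ∫_r^∞ sinh s (cosh s − cosh r)^{(n−3)/2} f(s) ds`,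
then `(2π)^{−(n−1)/2} (−(1/sinh r) ∂/∂r)^{(n−1)/2} (𝒜f) = f` for smooth even `f` with
`f(s)e^{cs}` integrable for every `c`. -/
theorem stmt_8 (m : ℕ) (hm : 1 ≤ m) (f : ℝ → ℝ)
    (hsmooth : ContDiff ℝ (⊤ : ℕ∞) f) (heven : ∀ s : ℝ, f (-s) = f s)
    (hdecay : ∀ c : ℝ, Integrable (fun s : ℝ => f s * Real.exp (c * s)))
    (A : ℝ → ℝ)
    (hA : ∀ r : ℝ, A r = ((2 * π) ^ m / Real.Gamma m) *
      ∫ s in Ioi r, Real.sinh s * (Real.cosh s - Real.cosh r) ^ (m - 1) * f s)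
    (T : (ℝ → ℝ) → ℝ → ℝ)
    (hT : ∀ g : ℝ → ℝ, ∀ r : ℝ, T g r = -(1 / Real.sinh r) * deriv g r) :
    ∀ r : ℝ, 0 < r → ((2 * π : ℝ) ^ m)⁻¹ * (T^[m] A) r = f r := by
  have hf : Continuous f := hsmooth.continuous
  set c0 : ℝ := (2 * π) ^ m / Real.Gamma m with hc0
  have hA' : ∀ r : ℝ, A r = c0 * B f (m - 1) r := by
    intro r; rw [hA r]; rfl
  have key : ∀ k, k ≤ m - 1 → ∀ r : ℝ, 0 < r →
      T^[k] A r = c0 * ((m - 1).descFactorial k : ℝ) * B f (m - 1 - k) r := by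
    intro k
    induction k with
    | zero =>
      intro _ r _
      simp [hA' r]
    | succ k ih =>
      intro hk r hr
      rw [Function.iterate_succ_apply', hT]
      have hk' : k ≤ m - 1 := by omega
      have heq : T^[k] A =ᶠ[nhds r]
          fun x => c0 * ((m - 1).descFactorial k : ℝ) * B f (m - 1 - k) x := by
        filter_upwards [Ioi_mem_nhds hr] with x hx using ih hk' x hx
      obtain ⟨p, hp⟩ : ∃ p, m - 1 - k = p + 1 := ⟨m - 1 - k - 1, by omega⟩
      have hd := hasDerivB hf hdecay p r
      rw [← hp] at hd
      have hderiv : deriv (T^[k] A) r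
          = c0 * ((m - 1).descFactorial k : ℝ)
            * (-((p : ℝ) + 1) * Real.sinh r * B f p r) := by
        rw [heq.deriv_eq]
        exact (hd.const_mul (c0 * ((m - 1).descFactorial k : ℝ))).deriv
      rw [hderiv]
      have hs : Real.sinh r ≠ 0 := ne_of_gt (by rwa [Real.sinh_pos_iff])
      have hcast : ((m - 1).descFactorial (k + 1) : ℝ)
          = ((m - 1 - k : ℕ) : ℝ) * ((m - 1).descFactorial k : ℝ) := by
        rw [Nat.descFactorial_succ]; push_cast; ring
      have hexp : m - 1 - (k + 1) = p := by omega
      have hcast2 : ((m - 1 - k : ℕ) : ℝ) = (p : ℝ) + 1 := by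
        rw [hp]; push_cast; ring
      rw [hexp, hcast, hcast2]
      field_simp
  intro r hr
  have hm1 : m - 1 + 1 = m := by omega
  have heq : T^[m-1] A =ᶠ[nhds r]
      fun x => c0 * ((m - 1).descFactorial (m - 1) : ℝ) * B f 0 x := by
    filter_upwards [Ioi_mem_nhds hr] with x hx
    have := key (m - 1) le_rfl x hx
    simpa using this
  have hTm : T^[m] A r = -(1 / Real.sinh r) * deriv (T^[m-1] A) r := by
    conv_lhs => rw [← hm1, Function.iterate_succ_apply', hT]
  have hderiv : deriv (T^[m-1] A) r
      = c0 * ((m - 1).descFactorial (m - 1) : ℝ) * (-(Real.sinh r * f r)) := by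
    rw [heq.deriv_eq]
    exact ((hasDerivB0 hf hdecay r).const_mul
      (c0 * ((m - 1).descFactorial (m - 1) : ℝ))).deriv
  rw [hTm, hderiv]
  have hs : Real.sinh r ≠ 0 := ne_of_gt (by rwa [Real.sinh_pos_iff])
  have hGamma : Real.Gamma m = ((Nat.factorial (m - 1) : ℕ) : ℝ) := by
    have : (m : ℝ) = ((m - 1 : ℕ) : ℝ) + 1 := by
      push_cast [Nat.cast_sub hm]; ring
    rw [this, Real.Gamma_nat_eq_factorial]
  have hdesc : ((m - 1).descFactorial (m - 1) : ℝ) = ((Nat.factorial (m - 1) : ℕ) : ℝ) := by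
    rw [Nat.descFactorial_self]
  rw [hdesc, hc0, hGamma]
  have hfac : ((Nat.factorial (m - 1) : ℕ) : ℝ) ≠ 0 := by positivity
  have h2pi : ((2 * π : ℝ) ^ m) ≠ 0 := by positivity
  field_simp
end

section
/- The Harish–Chandra c-function for Hⁿ, c(λ) = (Γ(2ρ)/Γ(ρ)) · Γ(iλ)/Γ(iλ+ρ) with ρ = (n−1)/2, satisfies in odd dimension n the explicit Plancherel density formula |c(λ)|^{−2} = (π/(2^{2n−4} Γ(n/2)²)) ∏_{j=0}^{(n−3)/2} (λ² + j²) for all real λ ≠ 0. -/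
open Real Complex

/-! For odd `n = 2m + 1` we have `ρ = m`, so the functional equation `Γ(z + 1) = z Γ(z)` turns
`Γ(iλ) / Γ(iλ + m)` into `1 / ∏_{j<m} (iλ + j)`, whose squared modulus is `∏_{j<m} (λ² + j²)`.
Legendre's duplication formula `Γ(m) Γ(m + 1/2) = 2^{1-2m} √π Γ(2m)` identifies the constant
`(Γ(2m)/Γ(m))²` with `2^{4m-2} Γ(m + 1/2)² / π`. -/

theorem ascPochhammer_eval_eq_prod_range {R : Type*} [CommSemiring R] (n : ℕ) (r : R) :
    (ascPochhammer R n).eval r = ∏ j ∈ Finset.range n, (r + j) := by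
  induction n with
  | zero => simp
  | succ n ih => simp [ascPochhammer_succ_right, ih, Finset.prod_range_succ]

theorem Complex.norm_sq_ascPochhammer_eval_I_mul (lam : ℝ) (n : ℕ) :
    ‖(ascPochhammer ℂ n).eval (I * lam)‖ ^ 2 =
      ∏ j ∈ Finset.range n, (lam ^ 2 + (j : ℝ) ^ 2) := by
  rw [ascPochhammer_eval_eq_prod_range, norm_prod, ← Finset.prod_pow]
  refine Finset.prod_congr rfl fun j _ => ?_
  rw [Complex.sq_norm, Complex.normSq_apply]
  simp only [add_re, mul_re, I_re, ofReal_re, I_im, ofReal_im, natCast_re, add_im, mul_im,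
    natCast_im]
  ring

theorem Real.Gamma_two_mul_div_Gamma_sq {s : ℝ} (hs : 0 < s) :
    (Real.Gamma (2 * s) / Real.Gamma s) ^ 2 =
      2 ^ (4 * s - 2) * Real.Gamma (s + 1 / 2) ^ 2 / π := by
  have hΓ : Real.Gamma s ≠ 0 := (Real.Gamma_pos_of_pos hs).ne'
  have h4 : (2 : ℝ) ^ (4 * s - 2) = ((2 : ℝ) ^ (2 * s - 1)) ^ 2 := by
    rw [← Real.rpow_two, ← Real.rpow_mul zero_le_two]; ring_nf
  have h2 : (2 : ℝ) ^ (1 - 2 * s) * 2 ^ (2 * s - 1) = 1 := by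
    rw [← Real.rpow_add two_pos]; simp
  have hdup : Real.Gamma (2 * s) * √π =
      2 ^ (2 * s - 1) * (Real.Gamma s * Real.Gamma (s + 1 / 2)) := by
    rw [Real.Gamma_mul_Gamma_add_half]
    linear_combination (-(Real.Gamma (2 * s) * √π)) * h2
  rw [h4, div_pow, div_eq_div_iff (pow_ne_zero 2 hΓ) pi_pos.ne', ← Real.sq_sqrt pi_pos.le]
  linear_combination
    (Real.Gamma (2 * s) * √π + 2 ^ (2 * s - 1) * (Real.Gamma s * Real.Gamma (s + 1 / 2))) * hdup

noncomputable def harishChandraC (ρ lam : ℝ) : ℂ :=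
  (Complex.Gamma (2 * ρ) / Complex.Gamma ρ) * Complex.Gamma (I * lam) /
    Complex.Gamma (I * lam + ρ)

theorem harishChandraC_natCast {lam : ℝ} (hlam : lam ≠ 0) (m : ℕ) :
    harishChandraC m lam =
      Real.Gamma (2 * m) / Real.Gamma m / (ascPochhammer ℂ m).eval (I * lam) := by
  have hpole : ∀ k : ℕ, I * lam ≠ -k := fun k h =>
    hlam (by simpa using congrArg Complex.im h)
  have hshift : Complex.Gamma (I * lam + m) =
      Complex.Gamma (I * lam) * (ascPochhammer ℂ m).eval (I * lam) := by
    rw [← Gamma_add_nat_div_Gamma_eq _ hpole, mul_div_cancel₀ _ (Complex.Gamma_ne_zero hpole)]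
  rw [harishChandraC, ofReal_natCast, hshift, ← Complex.Gamma_ofReal, ← Complex.Gamma_ofReal]
  push_cast
  field_simp [Complex.Gamma_ne_zero hpole]

theorem norm_sq_harishChandraC_natCast {lam : ℝ} (hlam : lam ≠ 0) (m : ℕ) :
    ‖harishChandraC m lam‖ ^ 2 =
      (Real.Gamma (2 * m) / Real.Gamma m) ^ 2 /
        ∏ j ∈ Finset.range m, (lam ^ 2 + (j : ℝ) ^ 2) := by
  rw [harishChandraC_natCast hlam, norm_div, div_pow, norm_sq_ascPochhammer_eval_I_mul,
    ← ofReal_div, norm_real, Real.norm_eq_abs, sq_abs]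

/-- For odd `n ≥ 3` and `ρ = (n−1)/2`, the Harish–Chandra `c`-function
`c(λ) = (Γ(2ρ)/Γ(ρ)) Γ(iλ)/Γ(iλ+ρ)` of `Hⁿ` satisfies the Plancherel density formula
`|c(λ)|^{−2} = (π/(2^{2n−4} Γ(n/2)²)) ∏_{j=0}^{(n−3)/2} (λ²+j²)` for real `λ ≠ 0`. -/
theorem stmt_10 (n : ℕ) (hn : 3 ≤ n) (hodd : Odd n) (lam : ℝ) (hlam : lam ≠ 0)
    (ρ : ℝ) (hρ : ρ = ((n : ℝ) - 1) / 2)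
    (c : ℂ)
    (hc : c = (Complex.Gamma (2 * ρ) / Complex.Gamma (ρ : ℂ)) *
      Complex.Gamma (Complex.I * lam) / Complex.Gamma (Complex.I * lam + ρ)) :
    (‖c‖ ^ 2)⁻¹ =
      π / (2 ^ (2 * n - 4) * Real.Gamma (n / 2) ^ 2) *
        ∏ j ∈ Finset.range ((n - 3) / 2 + 1), (lam ^ 2 + (j : ℝ) ^ 2) := by
  obtain ⟨m, rfl⟩ := hodd
  have hm : (0 : ℝ) < m := by exact_mod_cast (by omega : 0 < m)
  have hρm : ρ = m := by rw [hρ]; push_cast; ring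
  have hcm : c = harishChandraC m lam := by rw [hc, hρm]; rfl
  have hrange : (2 * m + 1 - 3) / 2 + 1 = m := by omega
  have hhalf : ((2 * m + 1 : ℕ) : ℝ) / 2 = m + 1 / 2 := by push_cast; ring
  have hpow : (2 : ℝ) ^ (2 * (2 * m + 1) - 4) = 2 ^ (4 * (m : ℝ) - 2) := by
    rw [← Real.rpow_natCast, Nat.cast_sub (by omega)]; push_cast; ring_nf
  rw [hcm, norm_sq_harishChandraC_natCast hlam, Real.Gamma_two_mul_div_Gamma_sq hm, hrange,
    hhalf, hpow]
  have hprod : 0 < ∏ j ∈ Finset.range m, (lam ^ 2 + (j : ℝ) ^ 2) :=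
    Finset.prod_pos fun j _ => by positivity
  have hΓ : 0 < Real.Gamma (m + 1 / 2) := Real.Gamma_pos_of_pos (by positivity)
  field_simp
end

section
/- On the homogeneous tree T_q, at the special spectral points λ = (τ/2)j with τ = 2π/log q and j ∈ ℤ, the function φ(r) = (−1)^{jr} (1 + ((q^{1/2}−q^{−1/2})/(q^{1/2}+q^{−1/2})) r) q^{−r/2} satisfies A φ = γ((τ/2)j) φ and φ(0) = 1, where γ(λ) = (q^{iλ}+q^{−iλ})/(q^{1/2}+q^{−1/2}) and A is the radial averaging operator (Aφ)(0) = φ(1), (Aφ)(r) = (qφ(r+1)+φ(r−1))/(q+1) for r ≥ 1. -/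
/-! With `s = q^{1/2}`, `t = q^{-1/2}` and `ε = (-1)^j`, the recurrence
`q φ(r+2) - (q+1) γ φ(r+1) + φ(r) = 0` has characteristic polynomial `(s x - ε)^2`, whose
double root `x = ε t` makes every `(a + b r) x^r` a solution; the coefficient of `r` in `φ` is
then fixed by `φ(1) = γ`. -/

open Real

theorem add_mul_pow_add_two {R : Type*} [CommRing R] (a b x : R) (r : ℕ) :
    (a + b * ↑(r + 2)) * x ^ (r + 2) =
      2 * x * ((a + b * ↑(r + 1)) * x ^ (r + 1)) - x ^ 2 * ((a + b * r) * x ^ r) := by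
  push_cast
  ring

theorem radial_recurrence_of_double_root {K : Type*} [Field K] {s t ε : K}
    (hst : s * t = 1) (hsum : s + t ≠ 0) (hε : ε ^ 2 = 1) (a b : K) (r : ℕ) :
    (s ^ 2 * ((a + b * ↑(r + 2)) * (ε * t) ^ (r + 2)) + (a + b * r) * (ε * t) ^ r) / (s ^ 2 + 1) =
      ε * 2 / (s + t) * ((a + b * ↑(r + 1)) * (ε * t) ^ (r + 1)) := by
  have hs : s ≠ 0 := left_ne_zero_of_mul_eq_one hst
  have hsx : s ^ 2 * (ε * t) ^ 2 = 1 := by linear_combination ε ^ 2 * (s * t + 1) * hst + hε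
  have hsq : s ^ 2 + 1 = s * (s + t) := by linear_combination -hst
  rw [add_mul_pow_add_two, hsq, div_eq_iff (mul_ne_zero hs hsum)]
  generalize (a + b * ↑(r + 1)) * (ε * t) ^ (r + 1) = u₁
  generalize (a + b * r) * (ε * t) ^ r = u₀
  field_simp
  linear_combination (-u₀) * hsx + 2 * ε * s * u₁ * hst

theorem rpow_neg_natCast_div_two {x : ℝ} (hx : 0 ≤ x) (r : ℕ) :
    x ^ (-(r : ℝ) / 2) = (x ^ (-(1 : ℝ) / 2)) ^ r := by
  rw [← rpow_natCast, ← rpow_mul hx]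
  ring_nf

/-- On the homogeneous tree `T_q`, at the special spectral points `λ = (τ/2)j`
(`τ = 2π/log q`, `j ∈ ℤ`), the function
`φ(r) = (−1)^{jr}(1 + ((q^{1/2}−q^{−1/2})/(q^{1/2}+q^{−1/2}))r)q^{−r/2}` satisfies
`Aφ = γ((τ/2)j)φ` with `γ((τ/2)j) = (−1)^j·2/(q^{1/2}+q^{−1/2})`, `φ(0) = 1`, for the
radial averaging operator `(Aφ)(0) = φ(1)`, `(Aφ)(r) = (qφ(r+1)+φ(r−1))/(q+1)`. -/
theorem stmt_13 (q : ℕ) (hq : 2 ≤ q) (j : ℤ)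
    (γ : ℝ)
    (hγ : γ = (-1 : ℝ) ^ j * 2 / ((q : ℝ) ^ ((1 : ℝ) / 2) + (q : ℝ) ^ (-(1 : ℝ) / 2)))
    (φ : ℕ → ℝ)
    (hφ : ∀ r : ℕ, φ r = (-1 : ℝ) ^ (j * r) *
      (1 + (((q : ℝ) ^ ((1 : ℝ) / 2) - (q : ℝ) ^ (-(1 : ℝ) / 2)) /
        ((q : ℝ) ^ ((1 : ℝ) / 2) + (q : ℝ) ^ (-(1 : ℝ) / 2))) * r) *
          (q : ℝ) ^ (-(r : ℝ) / 2)) :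
    φ 0 = 1 ∧ φ 1 = γ * φ 0 ∧
    ∀ r : ℕ, ((q : ℝ) * φ (r + 2) + φ r) / ((q : ℝ) + 1) = γ * φ (r + 1) := by
  have hq0 : (0 : ℝ) < q := by positivity
  set s : ℝ := (q : ℝ) ^ ((1 : ℝ) / 2)
  set t : ℝ := (q : ℝ) ^ (-(1 : ℝ) / 2)
  set ε : ℝ := (-1 : ℝ) ^ j
  have hst : s * t = 1 := by rw [← rpow_add hq0]; norm_num
  have hs2 : s ^ 2 = q := by rw [← rpow_natCast, ← rpow_mul hq0.le]; norm_num
  have hsum : s + t ≠ 0 := by positivity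
  have hε : ε ^ 2 = 1 := by rw [← zpow_natCast, ← zpow_mul, mul_comm, zpow_mul]; norm_num
  have hφ' : ∀ r : ℕ, φ r = (1 + (s - t) / (s + t) * r) * (ε * t) ^ r := by
    intro r
    rw [hφ, rpow_neg_natCast_div_two hq0.le, zpow_mul, zpow_natCast, mul_pow]
    ring
  refine ⟨by simp [hφ'], ?_, fun r => ?_⟩
  · rw [hφ', hφ', hγ, Nat.cast_one, Nat.cast_zero]
    field_simp
    linear_combination 2 * ε * (s + t) * hst
  · rw [hφ', hφ', hφ', hγ, ← hs2]
    exact radial_recurrence_of_double_root hst hsum hε _ _ r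
end

section
/- On T_q, the inverse Abel transform formula holds: if 𝒜f(h) = q^{|h|/2} f(|h|) + ((q−1)/q) ∑_{j=1}^∞ q^{|h|/2+j} f(|h|+2j) for f in the radial Schwartz space (i.e. q^{r/2} f(r) rapidly decreasing), then f(r) = ∑_{j=0}^∞ q^{−r/2−j} (𝒜f(r+2j) − 𝒜f(r+2j+2)) for all r ∈ ℕ. -/
open Real Filter

/-!
Put `g n = q^{n/2} f n`; the Schwartz bound with `m = 2` makes `g` summable, and
`𝒜f h = g h + ((q-1)/q) ∑_{j≥1} g (h + 2j)`. Two consecutive values of the transform differ by a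
single term, `𝒜f h - 𝒜f (h+2) = g h - g (h+2)/q = q^{h/2} (f h - f (h+2))`, so the `j`-th term of
the inversion series is `f (r+2j) - f (r+2j+2)` and the series telescopes to `f r`.
-/

theorem summable_of_sq_mul_le {w : ℕ → ℝ} {C : ℝ} (hw : ∀ n, 0 ≤ w n)
    (hC : ∀ n : ℕ, (n : ℝ) ^ 2 * w n ≤ C) : Summable w := by
  refine Summable.of_norm_bounded_eventually
    ((summable_one_div_nat_pow.2 one_lt_two).mul_left C) ?_
  filter_upwards [eventually_cofinite_ne 0] with n hn
  have hn2 : (0 : ℝ) < (n : ℝ) ^ 2 := by positivity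
  rw [Real.norm_of_nonneg (hw n), mul_one_div, le_div_iff₀ hn2, mul_comm]
  exact hC n

section

variable {G : Type*} [AddCommGroup G] [TopologicalSpace G] [IsTopologicalAddGroup G]

theorem Summable.hasSum_sub_succ {u : ℕ → G} (hu : Summable u) :
    HasSum (fun n ↦ u n - u (n + 1)) (u 0) := by
  obtain ⟨S, hS⟩ := hu
  simpa using hS.sub ((hasSum_nat_add_iff' 1).2 hS)

theorem tsum_add_two_mul_succ [T2Space G] {g : ℕ → G} {h : ℕ}
    (hg : Summable fun j ↦ g (h + 2 * (j + 1))) :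
    ∑' j, g (h + 2 * (j + 1)) = g (h + 2) + ∑' j, g (h + 2 + 2 * (j + 1)) := by
  refine hg.tsum_eq_zero_add.trans ?_
  congr 1
  exact tsum_congr fun j ↦ by ring_nf

end

noncomputable def abelSeries {R : Type*} [Ring R] [TopologicalSpace R] (c : R) (g : ℕ → R)
    (h : ℕ) : R :=
  g h + c * ∑' j, g (h + 2 * (j + 1))

theorem abelSeries_sub_abelSeries_add_two {R : Type*} [Ring R] [TopologicalSpace R]
    [IsTopologicalAddGroup R] [T2Space R] (c : R) {g : ℕ → R} {h : ℕ}
    (hg : Summable fun j ↦ g (h + 2 * (j + 1))) :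
    abelSeries c g h - abelSeries c g (h + 2) = g h - (1 - c) * g (h + 2) := by
  rw [abelSeries, abelSeries, tsum_add_two_mul_succ hg]
  noncomm_ring

/-- Inversion of the Abel transform on the homogeneous tree `T_q`: if
`𝒜f(h) = q^{h/2}f(h) + ((q−1)/q)∑_{j≥1} q^{h/2+j} f(h+2j)` for `f` in the radial
Schwartz space (i.e. `r^m q^{r/2} f(r)` bounded for all `m`), then
`f(r) = ∑_{j≥0} q^{−r/2−j}(𝒜f(r+2j) − 𝒜f(r+2j+2))` for all `r ∈ ℕ`. -/
theorem stmt_14 (q : ℕ) (hq : 2 ≤ q) (f : ℕ → ℂ)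
    (hschwartz : ∀ m : ℕ, ∃ C : ℝ, ∀ r : ℕ,
      (r : ℝ) ^ m * (q : ℝ) ^ ((r : ℝ) / 2) * ‖f r‖ ≤ C)
    (A : ℕ → ℂ)
    (hA : ∀ h : ℕ, A h = ((q : ℝ) ^ ((h : ℝ) / 2) : ℝ) * f h +
      (((q : ℝ) - 1) / q : ℝ) *
        ∑' j : ℕ, ((q : ℝ) ^ ((h : ℝ) / 2 + (j : ℝ) + 1) : ℝ) * f (h + 2 * (j + 1))) :
    ∀ r : ℕ, f r = ∑' j : ℕ,
      ((q : ℝ) ^ (-(r : ℝ) / 2 - (j : ℝ)) : ℝ) * (A (r + 2 * j) - A (r + 2 * j + 2)) := by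
  have hq1 : (1 : ℝ) ≤ q := by exact_mod_cast (by omega : 1 ≤ q)
  have hq0 : (0 : ℝ) < q := by linarith
  set g : ℕ → ℂ := fun n ↦ ((q : ℝ) ^ ((n : ℝ) / 2) : ℝ) * f n
  have hg_norm (n : ℕ) : ‖g n‖ = (q : ℝ) ^ ((n : ℝ) / 2) * ‖f n‖ := by
    rw [norm_mul, Complex.norm_real, Real.norm_of_nonneg (rpow_nonneg hq0.le _)]
  obtain ⟨C, hC⟩ := hschwartz 2
  have hg : Summable fun n ↦ ‖g n‖ :=
    summable_of_sq_mul_le (fun n ↦ norm_nonneg _) fun n ↦ by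
      rw [hg_norm, ← mul_assoc]; exact hC n
  have hf : Summable f := .of_norm_bounded hg fun n ↦ by
    rw [hg_norm]; exact le_mul_of_one_le_left (norm_nonneg _) (one_le_rpow hq1 (by positivity))
  have hA_eq (h : ℕ) : A h = abelSeries ((((q : ℝ) - 1) / q : ℝ) : ℂ) g h := by
    rw [hA, abelSeries]
    congr 2
    refine tsum_congr fun j ↦ ?_
    simp only [g]
    congr 3
    push_cast; ring
  have hdiff (h : ℕ) :
      A h - A (h + 2) = ((q : ℝ) ^ ((h : ℝ) / 2) : ℝ) * (f h - f (h + 2)) := by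
    have hinj : Function.Injective fun j : ℕ ↦ h + 2 * (j + 1) := fun a b hab ↦ by
      simp only at hab; omega
    rw [hA_eq, hA_eq,
      abelSeries_sub_abelSeries_add_two _ ((Summable.of_norm hg).comp_injective hinj)]
    simp only [g]
    rw [show ((h + 2 : ℕ) : ℝ) / 2 = h / 2 + 1 by push_cast; ring, rpow_add hq0, rpow_one]
    have hqC : (q : ℂ) ≠ 0 := by exact_mod_cast hq0.ne'
    push_cast
    field_simp
    ring
  intro r
  have hterm (j : ℕ) :
      (((q : ℝ) ^ (-(r : ℝ) / 2 - (j : ℝ)) : ℝ) : ℂ) * (A (r + 2 * j) - A (r + 2 * j + 2)) =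
        f (r + 2 * j) - f (r + 2 * (j + 1)) := by
    rw [hdiff, ← mul_assoc, ← Complex.ofReal_mul, ← rpow_add hq0]
    rw [show -(r : ℝ) / 2 - j + ((r + 2 * j : ℕ) : ℝ) / 2 = 0 by push_cast; ring]
    simp [mul_add, add_assoc]
  have hinj : Function.Injective fun j : ℕ ↦ r + 2 * j := fun a b hab ↦ by
    simp only at hab; omega
  rw [tsum_congr hterm]
  exact (hf.comp_injective hinj).hasSum_sub_succ.tsum_eq.symm
end
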